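/- Suppose x and p are elements of an associative ℂ-algebra satisfying the q-deformed Heisenberg relation x*p − q*(p*x) = iħ·1 with q ∈ ℂ and ħ ≠ 0. Then for every n ≥ 1: x*p^n − q^n*(p^n*x) = iħ·[n]_q·p^(n−1), where [n]_q = 1 + q + ⋯ + q^(n−1). -/

import Mathlib

open Finset

theorem mul_pow_succ_of_mul_eq_smul_add {R A : Type*} [CommSemiring R] [Semiring A] [Algebra R A]
    {q c : R} {x p : A} (h : x * p = q • (p * x) + c • 1) (n : ℕ) :
    x * p ^ (n + 1) = q ^ (n + 1) • (p ^ (n + 1) * x) + (c * ∑ i ∈ range (n + 1), q ^ i) • p ^ n := by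
  induction n with
  | zero => simpa using h
  | succ n ih =>
    calc x * p ^ (n + 2) = (x * p ^ (n + 1)) * p := by rw [pow_succ _ (n + 1), mul_assoc]
      _ = q ^ (n + 1) • (p ^ (n + 1) * (x * p)) + (c * ∑ i ∈ range (n + 1), q ^ i) • p ^ (n + 1) := by
        rw [ih, add_mul, smul_mul_assoc, smul_mul_assoc, mul_assoc, pow_succ p n]
      _ = q ^ (n + 2) • (p ^ (n + 2) * x) + (c * ∑ i ∈ range (n + 2), q ^ i) • p ^ (n + 1) := by
        rw [h, mul_add, mul_smul_comm, mul_smul_comm, mul_one, ← mul_assoc, ← pow_succ,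
          sum_range_succ _ (n + 1), pow_succ q (n + 1)]
        module

theorem q_heisenberg_power_general {A : Type*} [Ring A] [Algebra ℂ A]
    (q : ℂ) (hbar : ℝ) (x p : A)
    (h : x * p - q • (p * x) = (Complex.I * (hbar:ℂ)) • (1 : A)) :
    ∀ n : ℕ, 1 ≤ n →
      x * p ^ n - q ^ n • (p ^ n * x)
        = ((Complex.I * (hbar:ℂ)) * ∑ i ∈ Finset.range n, q ^ i) • p ^ (n - 1) := by
  intro n hn
  obtain ⟨m, rfl⟩ := Nat.exists_eq_add_of_le' hn
  rw [sub_eq_iff_eq_add', Nat.add_sub_cancel]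
  exact mul_pow_succ_of_mul_eq_smul_add (sub_eq_iff_eq_add'.mp h) m

theorem q_heisenberg_power {A : Type*} [Ring A] [Algebra ℂ A]
    (q : ℂ) (hbar : ℝ) (hhbar : hbar ≠ 0) (x p : A)
    (h : x * p - q • (p * x) = (Complex.I * (hbar:ℂ)) • (1 : A)) :
    ∀ n : ℕ, 1 ≤ n →
      x * p ^ n - q ^ n • (p ^ n * x)
        = ((Complex.I * (hbar:ℂ)) * ∑ i ∈ Finset.range n, q ^ i) • p ^ (n - 1) :=
  q_heisenberg_power_general q hbar x p h
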